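/- arXiv:1803.01694 — 3 statements merged into one kernel-verified Lean document; each statement's English description precedes it below -/
import Mathlib

section
/- Suppose a function g : [0,∞) → ℝ satisfies: g(t_k) = 0 at each triggering time t_k, g is differentiable on each interval [t_k, t_{k+1}) with derivative bounded by a constant c₀ > 0, and lim_{t → t_{k+1}⁻} g(t) ≥ δ² for a fixed δ > 0. Then every inter-event time satisfies t_{k+1} - t_k ≥ δ²/c₀, and consequently if there are infinitely many triggering times then t_k → ∞ (no Zeno behavior). -/
theorem stmt2 (t : ℕ → ℝ) (ht0 : t 0 = 0) (htmono : StrictMono t)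
    (g g' : ℝ → ℝ) (c₀ δ : ℝ) (hc₀ : 0 < c₀) (hδ : 0 < δ)
    (hreset : ∀ k, g (t k) = 0)
    (hderiv : ∀ k, ∀ s ∈ Set.Ico (t k) (t (k+1)),
      HasDerivWithinAt g (g' s) (Set.Ici (t k)) s ∧ g' s ≤ c₀)
    (hlim : ∀ k, ∃ L, Filter.Tendsto g (nhdsWithin (t (k+1)) (Set.Iio (t (k+1)))) (nhds L) ∧
      δ ^ 2 ≤ L) :
    (∀ k, δ ^ 2 / c₀ ≤ t (k+1) - t k) ∧ Filter.Tendsto t Filter.atTop Filter.atTop := by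
  have hgap : ∀ k, δ ^ 2 / c₀ ≤ t (k+1) - t k := by
    intro k
    have hlt : t k < t (k+1) := htmono (Nat.lt_succ_self k)
    -- key bound: g s ≤ c₀ * (s - t k) on [t k, t (k+1))
    have key : ∀ s ∈ Set.Ico (t k) (t (k+1)), g s ≤ c₀ * (s - t k) := by
      intro s hs
      have hcont : ContinuousOn g (Set.Icc (t k) s) := by
        intro x hx
        have hx' : x ∈ Set.Ico (t k) (t (k+1)) := ⟨hx.1, lt_of_le_of_lt hx.2 hs.2⟩
        exact ((hderiv k x hx').1.continuousWithinAt).mono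
          (fun y hy => (Set.mem_Icc.mp hy).1)
      have := image_le_of_deriv_right_le_deriv_boundary (a := t k) (b := s)
        (f := g) (f' := g') hcont
        (fun x hx => by
          have hx' : x ∈ Set.Ico (t k) (t (k+1)) := ⟨hx.1, lt_trans hx.2 hs.2⟩
          exact ((hderiv k x hx').1).mono (Set.Ici_subset_Ici.mpr hx.1))
        (B := fun x => c₀ * (x - t k)) (B' := fun _ => c₀)
        (by simp [hreset k])
        (Continuous.continuousOn (by continuity))
        (fun x _ => by
          simpa using (((hasDerivAt_id x).sub_const (t k)).const_mul c₀).hasDerivWithinAt)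
        (fun x hx => by
          have hx' : x ∈ Set.Ico (t k) (t (k+1)) := ⟨hx.1, lt_trans hx.2 hs.2⟩
          exact (hderiv k x hx').2)
      exact this (Set.right_mem_Icc.mpr hs.1)
    obtain ⟨L, hL, hδL⟩ := hlim k
    -- pass to the limit
    have hne : (nhdsWithin (t (k+1)) (Set.Iio (t (k+1)))).NeBot := nhdsLT_neBot _
    have hLle : L ≤ c₀ * (t (k+1) - t k) := by
      have htend : Filter.Tendsto (fun s => c₀ * (s - t k))
          (nhdsWithin (t (k+1)) (Set.Iio (t (k+1)))) (nhds (c₀ * (t (k+1) - t k))) := by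
        have hcont : Continuous fun s : ℝ => c₀ * (s - t k) := by fun_prop
        exact (hcont.tendsto _).mono_left nhdsWithin_le_nhds
      refine le_of_tendsto_of_tendsto hL htend ?_
      filter_upwards [Ioo_mem_nhdsLT hlt]
        with s hs
      exact key s ⟨le_of_lt hs.1, hs.2⟩
    have : δ ^ 2 ≤ c₀ * (t (k+1) - t k) := le_trans hδL hLle
    rw [div_le_iff₀ hc₀]
    linarith [this]
  refine ⟨hgap, ?_⟩
  have hpos : 0 < δ ^ 2 / c₀ := by positivity
  have hlow : ∀ k : ℕ, (k : ℝ) * (δ ^ 2 / c₀) ≤ t k := by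
    intro k
    induction k with
    | zero => simp [ht0]
    | succ n ih =>
      have := hgap n
      push_cast
      linarith
  exact Filter.tendsto_atTop_mono hlow
    (Filter.Tendsto.atTop_mul_const hpos tendsto_natCast_atTop_atTop)
end

section
/- Let (M, N) be a controllable pair with M ∈ ℝ^{s×s} Hurwitz and N ∈ ℝ^{s×1}, let Φ be the companion matrix of a polynomial P(λ) = λˢ − ϱ_s λ^{s−1} − ⋯ − ϱ₁ whose roots are distinct with zero real part, and Γ = e₁ᵀ (first standard basis row vector). Then the unique solution T of TΦ − MT = NΓ is nonsingular. -/
/-!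
Write `qⱼ = divX^[j+1] χ` for the quotient of `χ = χ_M` by `X^(j+1)`. Iterating the Sylvester
equation `T Φ = M T + N Γ` gives `T χ(Φ) = χ(M) T + ∑ⱼ qⱼ(M) N Γ Φʲ`, and the first term vanishes by
Cayley–Hamilton. For the companion matrix `Γ Φʲ = eⱼᵀ` for `j < s`, so `T χ(Φ)` is the matrix with
columns `qⱼ(M) N`, i.e. the controllability matrix times the Hankel matrix of the coefficients of
`χ`. That Hankel matrix is anti-triangular with ones on the antidiagonal since `χ` is monic of
degree `s`, so `T χ(Φ)` is invertible, and therefore so is `T`.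
-/

open Matrix Polynomial Finset

theorem Polynomial.coeff_divX_iterate {R : Type*} [Semiring R] (p : R[X]) (k m : ℕ) :
    (divX^[k] p).coeff m = p.coeff (m + k) := by
  induction k generalizing p with
  | zero => rfl
  | succ k ih => rw [Function.iterate_succ_apply, ih, coeff_divX, add_assoc]

theorem Polynomial.natDegree_divX_iterate {R : Type*} [Semiring R] (p : R[X]) (k : ℕ) :
    (divX^[k] p).natDegree = p.natDegree - k := by
  induction k generalizing p with
  | zero => rfl
  | succ k ih => rw [Function.iterate_succ_apply, ih, natDegree_divX_eq_natDegree_tsub_one]; omega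

theorem mul_aeval_eq_aeval_mul_add_sum {R A : Type*} [CommSemiring R] [Semiring A] [Algebra R A]
    {M Φ T B : A} (h : T * Φ = M * T + B) (p : R[X]) {n : ℕ} (hp : p.natDegree ≤ n) :
    T * aeval Φ p = aeval M p * T + ∑ j ∈ range n, aeval M (divX^[j + 1] p) * B * Φ ^ j := by
  induction n generalizing p with
  | zero =>
    rw [eq_C_of_natDegree_le_zero hp]
    simp [Algebra.commutes]
  | succ n ih =>
    have hq : (divX p).natDegree ≤ n := by
      rw [natDegree_divX_eq_natDegree_tsub_one]; omega
    have aeval_eq (x : A) : aeval x p = aeval x (divX p) * x + algebraMap R A (p.coeff 0) := by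
      conv_lhs => rw [← divX_mul_X_add p]
      simp
    rw [aeval_eq, aeval_eq, mul_add, ← mul_assoc, ih _ hq, add_mul, mul_assoc _ T, h,
      ← Algebra.commutes, sum_range_succ']
    simp only [Function.iterate_succ_apply, Function.iterate_zero_apply, pow_succ, ← mul_assoc,
      sum_mul, pow_zero, mul_one, mul_add, add_mul]
    abel

def companion {R : Type*} [Zero R] [One R] {s : ℕ} (ϱ : Fin s → R) : Matrix (Fin s) (Fin s) R :=
  of fun i j => if (i : ℕ) + 1 = j then 1 else if (i : ℕ) = s - 1 then ϱ j else 0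

def unitRow (R : Type*) [Zero R] [One R] (s j : ℕ) : Matrix (Fin 1) (Fin s) R :=
  of fun _ l => if (l : ℕ) = j then 1 else 0

section unitRow

variable {R : Type*} [Semiring R] {s : ℕ}

theorem unitRow_mul_apply (A : Matrix (Fin s) (Fin s) R) {j : ℕ} (hj : j < s) (a : Fin 1)
    (l : Fin s) :
    (unitRow R s j * A) a l = A ⟨j, hj⟩ l := by
  rw [mul_apply, sum_eq_single ⟨j, hj⟩] <;> simp +contextual [unitRow, Fin.ext_iff]

theorem unitRow_mul_companion (ϱ : Fin s → R) {j : ℕ} (hj : j + 1 < s) :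
    unitRow R s j * companion ϱ = unitRow R s (j + 1) := by
  ext a l
  rw [unitRow_mul_apply _ (by omega)]
  simp [companion, unitRow, show j ≠ s - 1 by omega, eq_comm]

theorem unitRow_zero_mul_companion_pow (ϱ : Fin s → R) {j : ℕ} (hj : j < s) :
    unitRow R s 0 * companion ϱ ^ j = unitRow R s j := by
  induction j with
  | zero => rw [pow_zero, Matrix.mul_one]
  | succ j ih => rw [pow_succ, ← Matrix.mul_assoc, ih (by omega), unitRow_mul_companion ϱ hj]

theorem sum_mul_unitRow {n : Type*} [Fintype n] (A : ℕ → Matrix n (Fin 1) R) :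
    ∑ j ∈ range s, A j * unitRow R s j = of fun i (l : Fin s) => A l i 0 := by
  ext i l
  simp [Matrix.sum_apply, mul_apply, unitRow]

end unitRow

def krylov {R n : Type*} [Semiring R] [Fintype n] [DecidableEq n]
    (M : Matrix n n R) (N : Matrix n (Fin 1) R) (k : ℕ) : Matrix n (Fin k) R :=
  of fun i j => (M ^ (j : ℕ) * N) i 0

theorem of_aeval_mul_eq_krylov_mul {R n ι : Type*} [CommSemiring R] [Fintype n] [DecidableEq n]
    (M : Matrix n n R) (N : Matrix n (Fin 1) R) {k : ℕ} (q : ι → R[X])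
    (hq : ∀ j, (q j).natDegree < k) :
    of (fun i j => (aeval M (q j) * N) i 0) =
      krylov M N k * of fun (m : Fin k) j => (q j).coeff m := by
  ext i j
  rw [of_apply, aeval_eq_sum_range' (hq j), Matrix.sum_mul, Matrix.sum_apply, mul_apply,
    ← Fin.sum_univ_eq_sum_range]
  simp [krylov, mul_comm]

def coeffHankel {R : Type*} [Semiring R] (p : R[X]) (s : ℕ) : Matrix (Fin s) (Fin s) R :=
  of fun m j => p.coeff (m + j + 1)

theorem Polynomial.Monic.isUnit_det_coeffHankel {R : Type*} [CommRing R] {p : R[X]} {s : ℕ}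
    (hp : p.Monic) (hdeg : p.natDegree = s) : IsUnit (coeffHankel p s).det := by
  have htri : ((coeffHankel p s).submatrix Fin.revPerm id).BlockTriangular OrderDual.toDual := by
    intro a b (hab : (a : ℕ) < b)
    apply coeff_eq_zero_of_natDegree_lt
    simp only [Fin.revPerm_apply, Fin.val_rev, id]
    omega
  have hdiag (a : Fin s) : (coeffHankel p s).submatrix Fin.revPerm id a a = 1 := by
    simp only [coeffHankel, submatrix_apply, of_apply, id, Fin.revPerm_apply, Fin.val_rev]
    rw [show s - (a + 1) + a + 1 = p.natDegree by omega]
    exact hp.coeff_natDegree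
  have hperm := det_permute Fin.revPerm (coeffHankel p s)
  rw [det_of_isLowerTriangular _ htri, prod_congr rfl fun a _ => hdiag a, prod_const_one] at hperm
  exact isUnit_of_mul_isUnit_right (hperm ▸ isUnit_one)

theorem stmt4_general (s : ℕ) (M : Matrix (Fin s) (Fin s) ℝ)
    (N : Matrix (Fin s) (Fin 1) ℝ) (ϱ : Fin s → ℝ)
    (Φ : Matrix (Fin s) (Fin s) ℝ)
    (hΦ : Φ = Matrix.of fun i j : Fin s => if (i:ℕ) + 1 = (j:ℕ) then 1
      else if (i:ℕ) = s - 1 then ϱ j else 0)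
    (Γ : Matrix (Fin 1) (Fin s) ℝ)
    (hΓ : Γ = Matrix.of fun _ (j : Fin s) => if (j:ℕ) = 0 then (1:ℝ) else 0)
    (hctrl : IsUnit (Matrix.of fun i j : Fin s => ((M ^ (j:ℕ)) * N) i 0).det)
    (T : Matrix (Fin s) (Fin s) ℝ) (hT : T * Φ - M * T = N * Γ) :
    IsUnit T.det := by
  obtain rfl : Φ = companion ϱ := hΦ
  obtain rfl : Γ = unitRow ℝ s 0 := hΓ
  have hdeg : M.charpoly.natDegree = s := by rw [charpoly_natDegree_eq_dim, Fintype.card_fin]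
  have hsyl := mul_aeval_eq_aeval_mul_add_sum (sub_eq_iff_eq_add'.mp hT) M.charpoly hdeg.le
  rw [aeval_self_charpoly, Matrix.zero_mul, zero_add] at hsyl
  have hterm : ∀ j ∈ range s,
      aeval M (divX^[j + 1] M.charpoly) * (N * unitRow ℝ s 0) * companion ϱ ^ j =
        aeval M (divX^[j + 1] M.charpoly) * N * unitRow ℝ s j := fun j hj => by
    rw [Matrix.mul_assoc, Matrix.mul_assoc N, unitRow_zero_mul_companion_pow ϱ (mem_range.mp hj),
      ← Matrix.mul_assoc]
  have hcols : T * aeval (companion ϱ) M.charpoly = krylov M N s * coeffHankel M.charpoly s := by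
    rw [hsyl, sum_congr rfl hterm, sum_mul_unitRow,
      of_aeval_mul_eq_krylov_mul M N (k := s) _ fun l => by rw [natDegree_divX_iterate]; omega]
    ext m l
    simp only [coeffHankel, coeff_divX_iterate, add_assoc]
  have hunit : IsUnit (T.det * (aeval (companion ϱ) M.charpoly).det) := by
    rw [← det_mul, hcols, det_mul]
    exact hctrl.mul (M.charpoly_monic.isUnit_det_coeffHankel hdeg)
  exact isUnit_of_mul_isUnit_left hunit

theorem stmt4 (s : ℕ) (hs : 0 < s) (M : Matrix (Fin s) (Fin s) ℝ)
    (N : Matrix (Fin s) (Fin 1) ℝ) (ϱ : Fin s → ℝ)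
    (Φ : Matrix (Fin s) (Fin s) ℝ)
    (hΦ : Φ = Matrix.of fun i j : Fin s => if (i:ℕ) + 1 = (j:ℕ) then 1
      else if (i:ℕ) = s - 1 then ϱ j else 0)
    (Γ : Matrix (Fin 1) (Fin s) ℝ)
    (hΓ : Γ = Matrix.of fun _ (j : Fin s) => if (j:ℕ) = 0 then (1:ℝ) else 0)
    (hM : ∀ μ ∈ spectrum ℂ (M.map Complex.ofReal), μ.re < 0)
    (hroots : ((Φ.map Complex.ofReal).charpoly).Separable)
    (hrootsIm : ∀ μ ∈ spectrum ℂ (Φ.map Complex.ofReal), μ.re = 0)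
    (hctrl : IsUnit (Matrix.of fun i j : Fin s => ((M ^ (j:ℕ)) * N) i 0).det)
    (T : Matrix (Fin s) (Fin s) ℝ) (hT : T * Φ - M * T = N * Γ) :
    IsUnit T.det :=
  stmt4_general s M N ϱ Φ hΦ Γ hΓ hctrl T hT
end

section
/- For the planar system ż₁ = a₁ z₁ + a₂ e, ż₂ = a₃ z₂ + (z₁ + p₁)(e + v₁) − p₁ v₁ with constants a₁ < 0, a₃ < 0 and bounded parameters p₁, v₁ (|p₁| ≤ P, |v₁| ≤ 1), the function V₀(z) = (ħ/2) z₁² + (ħ/4) z₁⁴ + (1/2) z₂² satisfies, for ħ sufficiently large, V̇₀ ≤ −ℓ₁ z₁² − ℓ₂ z₁⁴ − ℓ₃ z₂² + ℓ₄ e² + ℓ₅ e⁴ for some positive constants ℓ₁, …, ℓ₅, for all z ∈ ℝ² and e ∈ ℝ. -/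
set_option maxHeartbeats 2000000 in
theorem stmt16 (a₁ a₂ a₃ P : ℝ) (ha₁ : a₁ < 0) (ha₃ : a₃ < 0) (hP : 0 ≤ P) :
    ∃ hbar₀ : ℝ, ∀ hbar ≥ hbar₀, ∃ ℓ₁ ℓ₂ ℓ₃ ℓ₄ ℓ₅ : ℝ,
      0 < ℓ₁ ∧ 0 < ℓ₂ ∧ 0 < ℓ₃ ∧ 0 < ℓ₄ ∧ 0 < ℓ₅ ∧
      ∀ z₁ z₂ e p₁ v₁ : ℝ, |p₁| ≤ P → |v₁| ≤ 1 →
        (hbar * z₁ + hbar * z₁ ^ 3) * (a₁ * z₁ + a₂ * e)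
          + z₂ * (a₃ * z₂ + (z₁ + p₁) * (e + v₁) - p₁ * v₁)
        ≤ -ℓ₁ * z₁ ^ 2 - ℓ₂ * z₁ ^ 4 - ℓ₃ * z₂ ^ 2 + ℓ₄ * e ^ 2 + ℓ₅ * e ^ 4 := by
  have hb : (0:ℝ) < -a₁ := by linarith
  have hc : (0:ℝ) < -a₃ := by linarith
  set b : ℝ := -a₁ with hbdef
  set c : ℝ := -a₃ with hcdef
  clear_value b c
  have hbinv : (0:ℝ) < b⁻¹ := inv_pos.mpr hb
  have hcinv : (0:ℝ) < c⁻¹ := inv_pos.mpr hc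
  refine ⟨4*(b*c)⁻¹ + 4*b⁻¹ + 1, ?_⟩
  intro hbar hhbar
  have hnn : (0:ℝ) ≤ 4*(b*c)⁻¹ + 4*b⁻¹ := by positivity
  have hbar1 : (1:ℝ) ≤ hbar := by linarith
  have hbar0 : (0:ℝ) ≤ hbar := by linarith
  -- absorption: 2*c⁻¹ + 2 ≤ hbar * (b/2)
  have habs : 2*c⁻¹ + 2 ≤ hbar * (b/2) := by
    have e1 : (4*(b*c)⁻¹ + 4*b⁻¹ + 1) * (b/2) = 2*c⁻¹ + 2 + b/2 := by
      field_simp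
      ring
    have e2 : (4*(b*c)⁻¹ + 4*b⁻¹ + 1) * (b/2) ≤ hbar * (b/2) :=
      mul_le_mul_of_nonneg_right hhbar (by positivity)
    nlinarith [hb]
  refine ⟨2, 2, c/2, hbar * (a₂^2 * b⁻¹ / 2) + P^2 * c⁻¹ + 1,
      hbar * (27 * a₂^4 * (b^3)⁻¹ / 32) + c⁻¹, by norm_num, by norm_num, by linarith,
      ?_, ?_, ?_⟩
  · have h1 : (0:ℝ) ≤ hbar * (a₂^2 * b⁻¹ / 2) :=
      mul_nonneg hbar0 (by positivity)
    have h2 : (0:ℝ) ≤ P^2 * c⁻¹ := mul_nonneg (sq_nonneg P) hcinv.le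
    linarith
  · have h1 : (0:ℝ) ≤ hbar * (27 * a₂^4 * (b^3)⁻¹ / 32) :=
      mul_nonneg hbar0 (by positivity)
    linarith
  intro z₁ z₂ e p₁ v₁ hp hv
  have hp2 : p₁^2 ≤ P^2 := by
    have := abs_nonneg p₁
    nlinarith [sq_abs p₁, sq_abs P]
  have hv2 : v₁^2 ≤ 1 := by
    have := abs_nonneg v₁
    nlinarith [sq_abs v₁]
  -- Young for hbar*a₂*z₁*e
  have h1 : hbar * (a₂*z₁*e) ≤ hbar * (b/2*z₁^2 + a₂^2 * b⁻¹ / 2 * e^2) := by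
    refine mul_le_mul_of_nonneg_left ?_ hbar0
    have key : (b/2*z₁^2 + a₂^2 * b⁻¹ / 2 * e^2) - a₂*z₁*e
        = (b*z₁ - a₂*e)^2 * b⁻¹ / 2 := by
      field_simp
      ring
    have pos : (0:ℝ) ≤ (b*z₁ - a₂*e)^2 * b⁻¹ / 2 := by positivity
    linarith [key ▸ pos]
  -- Young for hbar*a₂*z₁^3*e
  have h2 : hbar * (a₂*z₁^3*e) ≤ hbar * (b/2*z₁^4 + 27 * a₂^4 * (b^3)⁻¹ / 32 * e^4) := by
    refine mul_le_mul_of_nonneg_left ?_ hbar0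
    have key : (b/2*z₁^4 + 27 * a₂^4 * (b^3)⁻¹ / 32 * e^4) - a₂*z₁^3*e
        = (16*(b*z₁)^4 + 27*(a₂*e)^4 - 32*(b*z₁)^3*(a₂*e)) * (b^3)⁻¹ / 32 := by
      field_simp
      ring
    have sos : 16*(b*z₁)^4 + 27*(a₂*e)^4 - 32*(b*z₁)^3*(a₂*e)
        = (16/3)*((b*z₁) - 3*(a₂*e)/2)^2*(2*(b*z₁)^2 + ((b*z₁) + 3*(a₂*e)/2)^2) := by
      ring
    have hnum : (0:ℝ) ≤ 16*(b*z₁)^4 + 27*(a₂*e)^4 - 32*(b*z₁)^3*(a₂*e) := by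
      rw [sos]; positivity
    have pos : (0:ℝ) ≤ (16*(b*z₁)^4 + 27*(a₂*e)^4 - 32*(b*z₁)^3*(a₂*e)) * (b^3)⁻¹ / 32 := by
      have : (0:ℝ) ≤ (b^3)⁻¹ := by positivity
      positivity
    linarith [key ▸ pos]
  -- Young for z₂ * X
  have h3 : z₂ * (z₁*(e+v₁) + p₁*e)
      ≤ c/2*z₂^2 + (z₁*(e+v₁) + p₁*e)^2 * c⁻¹ / 2 := by
    have key : (c/2*z₂^2 + (z₁*(e+v₁) + p₁*e)^2 * c⁻¹ / 2) - z₂ * (z₁*(e+v₁) + p₁*e)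
        = (c*z₂ - (z₁*(e+v₁) + p₁*e))^2 * c⁻¹ / 2 := by
      field_simp
      ring
    have pos : (0:ℝ) ≤ (c*z₂ - (z₁*(e+v₁) + p₁*e))^2 * c⁻¹ / 2 := by positivity
    linarith [key ▸ pos]
  -- bound X^2
  have h4 : (z₁*(e+v₁) + p₁*e)^2 ≤ 2*z₁^4 + 2*e^4 + 4*z₁^2 + 2*P^2*e^2 := by
    have hev : (e+v₁)^2 ≤ 2*e^2 + 2*v₁^2 := by nlinarith [sq_nonneg (e - v₁)]
    have hz : z₁^2*(e+v₁)^2 ≤ z₁^2*(2*e^2 + 2*v₁^2) :=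
      mul_le_mul_of_nonneg_left hev (sq_nonneg z₁)
    have hzv : z₁^2*v₁^2 ≤ z₁^2 := by nlinarith [sq_nonneg z₁]
    have hpe : p₁^2*e^2 ≤ P^2*e^2 := mul_le_mul_of_nonneg_right hp2 (sq_nonneg e)
    have hze : z₁^2*e^2 ≤ (z₁^4 + e^4)/2 := by nlinarith [sq_nonneg (z₁^2 - e^2)]
    nlinarith [sq_nonneg (z₁*(e+v₁) - p₁*e)]
  -- multiply by c⁻¹
  have h6 : (z₁*(e+v₁) + p₁*e)^2 * c⁻¹
      ≤ (2*z₁^4 + 2*e^4 + 4*z₁^2 + 2*P^2*e^2) * c⁻¹ :=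
    mul_le_mul_of_nonneg_right h4 hcinv.le
  -- absorption facts multiplied by powers of z₁
  have hA : (2*c⁻¹ + 2)*z₁^2 ≤ hbar * (b/2) * z₁^2 :=
    mul_le_mul_of_nonneg_right habs (sq_nonneg z₁)
  have hB : (2*c⁻¹ + 2)*z₁^4 ≤ hbar * (b/2) * z₁^4 :=
    mul_le_mul_of_nonneg_right habs (by positivity)
  have hz14 : (0:ℝ) ≤ z₁^4 * c⁻¹ := by positivity
  have he2 : (0:ℝ) ≤ e^2 := sq_nonneg e
  rw [show a₁ = -b by rw [hbdef]; ring, show a₃ = -c by rw [hcdef]; ring]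
  linarith [h1, h2, h3, h6, hA, hB, hz14, he2]
end
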